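/- Let E be a measurable space, 𝒞 = {1,...,C} a finite label set, and (X_0, C_0), (X_1, C_1), ..., (X_n, C_n) i.i.d. random pairs in E × 𝒞. Let T be a nonempty finite set of checkpoints and, for each checkpoint t ∈ T and each model k ∈ {1,...,K}, let s_t^k : E × 𝒞 → ℝ be a measurable score function. Define per-model conformal p-values p_{t,c}^k(X_0) = (1 + #{i ∈ {1,...,n} : s_t^k(X_0, c) ≤ s_t^k(X_i, C_i)}) / (n + 1), merged p-values p_{t,c}(X_0) = K · min_{k=1,...,K} p_{t,c}^k(X_0), and prediction sets Γ_t(X_0) = {c ∈ 𝒞 : p_{t,c}(X_0) > α} with α = (1 − p_targ)/|T| for a given p_targ ∈ (0,1). Then for every measurable stopping rule τ mapping the outcome to an element of T, Pr(C_0 ∈ Γ_τ(X_0)) ≥ p_targ. -/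

import Mathlib

/-!
For a fixed checkpoint and model, the conformal p-value of the test point is super-uniform: among
`n + 1` exchangeable points at most `β (n + 1)` can have p-value `≤ β` (the one of smallest score
among them is outranked by all the others), and by exchangeability each point does so with the
same probability. Bonferroni makes `K · min` of such p-variables again a p-variable, whatever their
dependence. Finally, miscoverage at the data-dependent checkpoint `τ` implies miscoverage at some
fixed checkpoint, so a union bound over the `|T|` checkpoints at level `(1 - p_targ) / |T|` costs
exactly `1 - p_targ`.
-/

open MeasureTheory ProbabilityTheory Finset
open scoped Classical ENNReal

section

variable {ι E : Type*} [Fintype ι]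

lemma measurePreserving_comp_perm [MeasurableSpace E] (ν : Measure E) [SigmaFinite ν]
    (σ : Equiv.Perm ι) :
    MeasurePreserving (fun z : ι → E => z ∘ σ)
      (Measure.pi fun _ => ν) (Measure.pi fun _ => ν) := by
  convert measurePreserving_piCongrLeft (fun _ : ι => ν) σ.symm using 1
  ext z i
  conv_rhs => rw [← σ.symm_apply_apply i]
  rw [MeasurableEquiv.piCongrLeft_apply_apply]
  rfl

lemma sum_measure_le_of_forall_card_le {α : Type*} [MeasurableSpace α] (μ : Measure α)
    {A : ι → Set α} (hA : ∀ j, MeasurableSet (A j)) {c : ℝ≥0∞}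
    (h : ∀ x, (#{j | x ∈ A j} : ℝ≥0∞) ≤ c) : ∑ j, μ (A j) ≤ c * μ Set.univ := by
  calc ∑ j, μ (A j) = ∫⁻ x, ∑ j, (A j).indicator 1 x ∂μ := by
        rw [lintegral_finsetSum _ fun j _ => measurable_one.indicator (hA j)]
        simp only [lintegral_indicator_one (hA _)]
    _ = ∫⁻ x, (#{j | x ∈ A j} : ℝ≥0∞) ∂μ := by
        congr 1 with x
        simp only [Set.indicator_apply, Pi.one_apply, sum_boole]
    _ ≤ ∫⁻ _, c ∂μ := lintegral_mono h
    _ = c * μ Set.univ := lintegral_const c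

end

section Conformal

variable {ι E : Type*} [Fintype ι] [DecidableEq ι]

noncomputable def conformalPValue (f : E → ℝ) (z : ι → E) (j : ι) : ℝ :=
  (1 + (#{i | i ≠ j ∧ f (z j) ≤ f (z i)} : ℝ)) / Fintype.card ι

lemma conformalPValue_comp_perm (f : E → ℝ) (z : ι → E) (σ : Equiv.Perm ι) (j : ι) :
    conformalPValue f (z ∘ σ) j = conformalPValue f z (σ j) := by
  unfold conformalPValue
  congr 3
  exact card_equiv σ fun i => by simp

lemma card_conformalPValue_le_le (f : E → ℝ) (z : ι → E) {β : ℝ} (hβ : 0 ≤ β) :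
    (#{j | conformalPValue f z j ≤ β} : ℝ) ≤ β * Fintype.card ι := by
  set S : Finset ι := {j | conformalPValue f z j ≤ β}
  obtain hS | hS := S.eq_empty_or_nonempty
  · simp only [hS, card_empty, Nat.cast_zero]
    positivity
  obtain ⟨j, hjS, hjmin⟩ := S.exists_min_image (fun j => f (z j)) hS
  have hcard : #S ≤ 1 + #{i | i ≠ j ∧ f (z j) ≤ f (z i)} := by
    have hsub : S.erase j ⊆ ({i | i ≠ j ∧ f (z j) ≤ f (z i)} : Finset ι) := fun i hi =>
      mem_filter.mpr ⟨mem_univ i, ne_of_mem_erase hi, hjmin i (mem_of_mem_erase hi)⟩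
    have := card_le_card hsub
    rw [card_erase_of_mem hjS] at this
    omega
  have hj : conformalPValue f z j ≤ β := (mem_filter.mp hjS).2
  have hι : (0 : ℝ) < Fintype.card ι := by exact_mod_cast Fintype.card_pos_iff.mpr ⟨j⟩
  unfold conformalPValue at hj
  rw [div_le_iff₀ hι] at hj
  calc (#S : ℝ) ≤ 1 + #{i | i ≠ j ∧ f (z j) ≤ f (z i)} := by exact_mod_cast hcard
    _ ≤ β * Fintype.card ι := hj

lemma measurable_conformalPValue [MeasurableSpace E] {f : E → ℝ} (hf : Measurable f) (j : ι) :
    Measurable fun z : ι → E => conformalPValue f z j := by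
  unfold conformalPValue
  simp only [card_filter, Nat.cast_sum, Nat.cast_ite, Nat.cast_one, Nat.cast_zero]
  refine (measurable_const.add (measurable_sum _ fun i _ => ?_)).div_const _
  refine Measurable.ite ?_ measurable_const measurable_const
  exact (MeasurableSet.const _).inter
    (measurableSet_le (hf.comp (measurable_pi_apply j)) (hf.comp (measurable_pi_apply i)))

lemma measure_pi_conformalPValue_le [MeasurableSpace E] (ν : Measure E) [IsProbabilityMeasure ν]
    {f : E → ℝ} (hf : Measurable f) (j : ι) {β : ℝ} (hβ : 0 ≤ β) :
    Measure.pi (fun _ : ι => ν) {z | conformalPValue f z j ≤ β} ≤ ENNReal.ofReal β := by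
  set π := Measure.pi fun _ : ι => ν
  set A : ι → Set (ι → E) := fun j => {z | conformalPValue f z j ≤ β}
  have hA : ∀ j, MeasurableSet (A j) := fun j =>
    measurableSet_le (measurable_conformalPValue hf j) measurable_const
  have hexch : ∀ j', π (A j') = π (A j) := fun j' => by
    have hpre : (fun z => z ∘ Equiv.swap j j') ⁻¹' A j = A j' := by
      ext z
      simp [A, conformalPValue_comp_perm]
    rw [← hpre, (measurePreserving_comp_perm ν _).measure_preimage (hA j).nullMeasurableSet]
  have hsum := sum_measure_le_of_forall_card_le π hA
    (c := ENNReal.ofReal (β * Fintype.card ι)) fun z => by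
      convert (ENNReal.ofReal_natCast _).symm.trans_le
        (ENNReal.ofReal_le_ofReal (card_conformalPValue_le_le f z hβ)) using 4
      exact Iff.rfl
  have hcard : (Fintype.card ι : ℝ≥0∞) ≠ 0 := by
    simpa using (Fintype.card_pos_iff.mpr ⟨j⟩).ne'
  rw [← ENNReal.mul_le_mul_iff_right hcard (ENNReal.natCast_ne_top _)]
  simpa [hexch, π, ENNReal.ofReal_mul hβ, mul_comm] using hsum

end Conformal

section PVariable

variable {Ω : Type*} [MeasurableSpace Ω] (μ : Measure Ω)

def IsPVariable (p : Ω → ℝ) : Prop :=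
  ∀ β, 0 ≤ β → μ {ω | p ω ≤ β} ≤ ENNReal.ofReal β

lemma isPVariable_conformalPValue [IsProbabilityMeasure μ] {ι E : Type*} [Fintype ι]
    [DecidableEq ι] [MeasurableSpace E] {Z : ι → Ω → E} (hmeas : ∀ i, Measurable (Z i))
    (hindep : iIndepFun Z μ) {j : ι} (hident : ∀ i, IdentDistrib (Z i) (Z j) μ μ)
    {f : E → ℝ} (hf : Measurable f) :
    IsPVariable μ fun ω => conformalPValue f (fun i => Z i ω) j := by
  intro β hβ
  have hZ : Measurable fun ω i => Z i ω := measurable_pi_lambda _ hmeas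
  have hmap : μ.map (fun ω i => Z i ω) = Measure.pi fun _ => μ.map (Z j) := by
    rw [hindep.map_fun_eq_pi_map fun i => (hmeas i).aemeasurable]
    exact congrArg Measure.pi (funext fun i => (hident i).map_eq)
  have := Measure.isProbabilityMeasure_map (μ := μ) (hmeas j).aemeasurable
  calc μ {ω | conformalPValue f (fun i => Z i ω) j ≤ β}
      = μ.map (fun ω i => Z i ω) {z | conformalPValue f z j ≤ β} :=
        (Measure.map_apply hZ (measurableSet_le (measurable_conformalPValue hf j)
          measurable_const)).symm
    _ ≤ ENNReal.ofReal β := hmap ▸ measure_pi_conformalPValue_le _ hf j hβ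

variable {μ}

lemma measure_iUnion_le_card_mul_of_isPVariable {κ : Type*} [Fintype κ] {p : κ → Ω → ℝ}
    (hp : ∀ k, IsPVariable μ (p k)) {β : ℝ} (hβ : 0 ≤ β) :
    μ (⋃ k, {ω | p k ω ≤ β}) ≤ Fintype.card κ * ENNReal.ofReal β :=
  calc μ (⋃ k, {ω | p k ω ≤ β}) ≤ ∑ k, μ {ω | p k ω ≤ β} :=
        measure_iUnion_fintype_le _ _
    _ ≤ ∑ _k : κ, ENNReal.ofReal β := sum_le_sum fun k _ => hp k β hβ
    _ = Fintype.card κ * ENNReal.ofReal β := by simp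

lemma isPVariable_card_mul_iInf {κ : Type*} [Fintype κ] [Nonempty κ] {p : κ → Ω → ℝ}
    (hp : ∀ k, IsPVariable μ (p k)) :
    IsPVariable μ fun ω => Fintype.card κ * ⨅ k, p k ω := by
  intro β hβ
  have hκ : (0 : ℝ) < Fintype.card κ := Nat.cast_pos.mpr Fintype.card_pos
  have hsub : {ω | Fintype.card κ * ⨅ k, p k ω ≤ β} ⊆
      ⋃ k, {ω | p k ω ≤ β / Fintype.card κ} := by
    intro ω hω
    obtain ⟨k, hk⟩ := exists_eq_ciInf_of_finite (f := fun k => p k ω)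
    refine Set.mem_iUnion.mpr ⟨k, ?_⟩
    show p k ω ≤ _
    rw [le_div_iff₀' hκ, hk]
    exact hω
  calc μ {ω | Fintype.card κ * ⨅ k, p k ω ≤ β}
      ≤ Fintype.card κ * ENNReal.ofReal (β / Fintype.card κ) :=
        (measure_mono hsub).trans (measure_iUnion_le_card_mul_of_isPVariable hp (by positivity))
    _ = ENNReal.ofReal β := by
        rw [← ENNReal.ofReal_natCast, ← ENNReal.ofReal_mul hκ.le, mul_div_cancel₀ _ hκ.ne']

lemma measure_stopped_le_card_mul {T : Type*} [Fintype T] {p : T → Ω → ℝ}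
    (hp : ∀ t, IsPVariable μ (p t)) (τ : Ω → T) {β : ℝ} (hβ : 0 ≤ β) :
    μ {ω | p (τ ω) ω ≤ β} ≤ Fintype.card T * ENNReal.ofReal β :=
  (measure_mono fun ω hω => Set.mem_iUnion.mpr ⟨τ ω, hω⟩).trans
    (measure_iUnion_le_card_mul_of_isPVariable hp hβ)

lemma ofReal_le_measure_of_measure_compl_le [IsProbabilityMeasure μ] {s : Set Ω} {a : ℝ}
    (ha : a ≤ 1) (h : μ sᶜ ≤ ENNReal.ofReal (1 - a)) : ENNReal.ofReal a ≤ μ s := by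
  have hone : 1 ≤ μ s + μ sᶜ := by
    simpa [measure_univ, Set.union_compl_self] using measure_union_le (μ := μ) s sᶜ
  calc ENNReal.ofReal a = 1 - ENNReal.ofReal (1 - a) := by
        rw [← ENNReal.ofReal_one, ← ENNReal.ofReal_sub _ (sub_nonneg.mpr ha), sub_sub_cancel]
    _ ≤ μ s := tsub_le_iff_right.mpr (hone.trans (add_le_add_right h _))

end PVariable

theorem ensemble_spikecp_pm_reliability_general
    {Ω E T : Type*} [MeasurableSpace Ω] [MeasurableSpace E]
    (μ : Measure Ω) [IsProbabilityMeasure μ]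
    [Fintype T] [Nonempty T]
    (n C : ℕ)
    (Z : Fin (n + 1) → Ω → E × Fin C)
    (hmeas : ∀ i, Measurable (Z i))
    (hindep : iIndepFun Z μ)
    (hident : ∀ i, IdentDistrib (Z i) (Z 0) μ μ)
    (K : ℕ) (hK : 0 < K)
    (s : T → Fin K → E × Fin C → ℝ) (hs : ∀ t k, Measurable (s t k))
    (ptarg : ℝ) (hptarg : ptarg ∈ Set.Ioo (0 : ℝ) 1)
    (τ : Ω → T) :
    ENNReal.ofReal ptarg ≤
      μ {ω | (Z 0 ω).2 ∈ {c : Fin C |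
        (1 - ptarg) / (Fintype.card T : ℝ) <
          (K : ℝ) * ⨅ k : Fin K,
            (1 + ((Finset.univ.filter
                fun i : Fin (n + 1) =>
                  i ≠ 0 ∧ s (τ ω) k ((Z 0 ω).1, c) ≤ s (τ ω) k (Z i ω)).card : ℝ))
              / ((n : ℝ) + 1)}} := by
  have : Nonempty (Fin K) := ⟨⟨0, hK⟩⟩
  have hT : (0 : ℝ) < Fintype.card T := Nat.cast_pos.mpr Fintype.card_pos
  have hmerged (t : T) : IsPVariable μ fun ω =>
      (K : ℝ) * ⨅ k, conformalPValue (s t k) (fun i => Z i ω) 0 := by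
    simpa using isPVariable_card_mul_iInf fun k =>
      isPVariable_conformalPValue μ hmeas hindep hident (hs t k)
  have hmiss := measure_stopped_le_card_mul hmerged τ
    (div_nonneg (sub_nonneg.mpr hptarg.2.le) hT.le)
  refine ofReal_le_measure_of_measure_compl_le hptarg.2.le
    ((measure_mono fun ω hω => ?_).trans (hmiss.trans_eq ?_))
  · simpa [conformalPValue] using hω
  · rw [← ENNReal.ofReal_natCast, ← ENNReal.ofReal_mul hT.le, mul_div_cancel₀ _ hT.ne']

/-- Let `Z i = (X i, C i)`, `i = 0, ..., n`, be i.i.d. random pairs in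
`E × 𝒞` with `𝒞 = Fin C`. Let `T` be a nonempty finite set of checkpoints and, for each
checkpoint `t` and model `k ∈ {1,...,K}`, let `s t k : E × 𝒞 → ℝ` be a measurable score
function. Define per-model conformal p-values
`p_{t,c}^k(X 0) = (1 + #{i ∈ {1,...,n} : s t k (X 0, c) ≤ s t k (X i, C i)})/(n+1)`,
merged p-values `p_{t,c}(X 0) = K ⬝ min_k p_{t,c}^k(X 0)`, and prediction sets
`Γ_t(X 0) = {c : p_{t,c}(X 0) > α}` with `α = (1 − p_targ)/|T|`, `p_targ ∈ (0,1)`.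
Then for every measurable stopping rule `τ` mapping the outcome to an element of `T`,
`Pr(C 0 ∈ Γ_τ(X 0)) ≥ p_targ`. -/
theorem ensemble_spikecp_pm_reliability
    {Ω E T : Type*} [MeasurableSpace Ω] [MeasurableSpace E]
    (μ : Measure Ω) [IsProbabilityMeasure μ]
    [Fintype T] [Nonempty T] [MeasurableSpace T] [MeasurableSingletonClass T]
    (n C : ℕ) (hC : 0 < C)
    (Z : Fin (n + 1) → Ω → E × Fin C)
    (hmeas : ∀ i, Measurable (Z i))
    (hindep : iIndepFun Z μ)
    (hident : ∀ i, IdentDistrib (Z i) (Z 0) μ μ)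
    (K : ℕ) (hK : 0 < K)
    (s : T → Fin K → E × Fin C → ℝ) (hs : ∀ t k, Measurable (s t k))
    (ptarg : ℝ) (hptarg : ptarg ∈ Set.Ioo (0 : ℝ) 1)
    (τ : Ω → T) (hτ : Measurable τ) :
    ENNReal.ofReal ptarg ≤
      μ {ω | (Z 0 ω).2 ∈ {c : Fin C |
        (1 - ptarg) / (Fintype.card T : ℝ) <
          (K : ℝ) * ⨅ k : Fin K,
            (1 + ((Finset.univ.filter
                fun i : Fin (n + 1) =>
                  i ≠ 0 ∧ s (τ ω) k ((Z 0 ω).1, c) ≤ s (τ ω) k (Z i ω)).card : ℝ))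
              / ((n : ℝ) + 1)}} :=
  ensemble_spikecp_pm_reliability_general μ n C Z hmeas hindep hident K hK s hs ptarg hptarg τ
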